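/- Let S be a type and let R₁ : O₁ → Set (S × S) and R₂ : O₂ → Set (S × S) be domain models over S. Suppose h assigns to each operator o ∈ O₁ a nonempty finite sequence h(o) of operators from O₂ such that R₁(o) ⊆ Γ(h(o)). Then for every nonempty finite sequence seq = ⟨o₀,…,oₙ⟩ of operators from O₁, the reach set of seq over D₁ is contained in the reach set over D₂ of the concatenation h(o₀) ++ … ++ h(oₙ). -/
import Mathlib


/-- Relational composition: `A ; B`. -/
def comp {S : Type*} (A B : Set (S × S)) : Set (S × S) :=
  {p | ∃ t, (p.1, t) ∈ A ∧ (t, p.2) ∈ B}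

/-- Reach set of a nonempty finite sequence of operators, represented as
a head operator together with the list of remaining operators. -/
def seqReach {S O : Type*} (R : O → Set (S × S)) : O → List O → Set (S × S)
  | o, [] => R o
  | o, o' :: rest => comp (R o) (seqReach R o' rest)

/-- Reach set of a domain model: union over all nonempty finite sequences of operators. -/
def domReach {S O : Type*} (R : O → Set (S × S)) : Set (S × S) :=
  ⋃ (o : O), ⋃ (l : List O), seqReach R o l

/-- Concatenation of the nonempty sequences `h o₀, …, h oₙ` assigned to the
operators of a nonempty sequence `⟨o₀, …, oₙ⟩`. -/
def hcat {O₁ O₂ : Type*} (h : O₁ → O₂ × List O₂) : O₁ → List O₁ → O₂ × List O₂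
  | o, [] => h o
  | o, o' :: rest => ((h o).1, (h o).2 ++ (hcat h o' rest).1 :: (hcat h o' rest).2)

lemma comp_assoc {S : Type*} (A B C : Set (S × S)) : comp (comp A B) C = comp A (comp B C) := by
  ext ⟨s, u⟩
  constructor
  · rintro ⟨t, ⟨t', h1, h2⟩, h3⟩; exact ⟨t', h1, t, h2, h3⟩
  · rintro ⟨t', h1, t, h2, h3⟩; exact ⟨t, ⟨t', h1, h2⟩, h3⟩

lemma seqReach_append {S O : Type*} (R : O → Set (S × S)) (o : O) (l1 : List O) (o2 : O)
    (l2 : List O) : seqReach R o (l1 ++ o2 :: l2) = comp (seqReach R o l1) (seqReach R o2 l2) := by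
  induction l1 generalizing o with
  | nil => rfl
  | cons a t ih => simp only [List.cons_append, seqReach, List.append_eq, ih, comp_assoc]

/-- If each operator `o` of `D₁` satisfies `R₁ o ⊆ Γ(h o)`, then the reach set of
any nonempty sequence over `D₁` is contained in the reach set of the concatenation
of the assigned sequences over `D₂`. -/
theorem stmt_4 {S O₁ O₂ : Type*} (R₁ : O₁ → Set (S × S)) (R₂ : O₂ → Set (S × S))
    (h : O₁ → O₂ × List O₂) (hh : ∀ o : O₁, R₁ o ⊆ seqReach R₂ (h o).1 (h o).2)
    (o : O₁) (l : List O₁) :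
    seqReach R₁ o l ⊆ seqReach R₂ (hcat h o l).1 (hcat h o l).2 := by
  induction l generalizing o with
  | nil => exact hh o
  | cons a t ih =>
    rintro ⟨s, u⟩ ⟨x, h1, h2⟩
    simp only [hcat, seqReach_append]
    exact ⟨x, hh o h1, ih a h2⟩
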